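/- For every n ≥ 1, the following identity holds in ℝ: det_{0≤i,j≤n−1}( g_20V(u,v)|_{u^i v^j} ) = (2^{n(n−1)/4} / 2) · det_{0≤i,j≤n−1}( θ_{2j+1}(i) + θ_{2j+1}(−i) ), where for a real number x and a positive integer m, θ_m(x) := (2^{x/2}/m!) · (x+1)(x+2)···(x+m). -/

import Mathlib

noncomputable section

/-- Formal power series in two variables `u, v` over `ℚ`. -/
abbrev PS : Type := MvPowerSeries (Fin 2) ℚ

def uu : PS := MvPowerSeries.X 0
def vv : PS := MvPowerSeries.X 1

/-- Coefficient of `u^i v^j`. -/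
def cf (i j : ℕ) (f : PS) : ℚ :=
  MvPowerSeries.coeff (Finsupp.single 0 i + Finsupp.single 1 j) f

/-- `f_DT(u,v) = (1+u)/(1 - v - 4uv - u²v + u²v²)` as a power series. -/
def fDT : PS := (1 + uu) * (1 - vv - 4 * uu * vv - uu ^ 2 * vv + uu ^ 2 * vv ^ 2)⁻¹

/-- `g_20V(u,v) = (1+u²)(1+2u-u²)/((1-u²v)((1-u)² - v(1+u)²))` as a power series. -/
def g20V : PS :=
  (1 + uu ^ 2) * (1 + 2 * uu - uu ^ 2) *
    ((1 - uu ^ 2 * vv) * ((1 - uu) ^ 2 - vv * (1 + uu) ^ 2))⁻¹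

/-- `θ_m(x) = (2^{x/2}/m!)·(x+1)(x+2)···(x+m)`, with `2^{x/2}` the real power. -/
def theta (m : ℕ) (x : ℝ) : ℝ :=
  (2 : ℝ) ^ (x / 2) / (m.factorial : ℝ) * ∏ k ∈ Finset.range m, (x + (k : ℝ) + 1)

/-!
With `w = (1+u)/(1-u)`, partial fractions give `g_20V = w²/(1 - w²v) - u²/(1 - u²v)`, so the
`(i, j)` entry is `[uⁱ](w^{m+1} - u^{m+1})` with `m = 2j+1`. In the variable `T = u/(1+u)` one has
`w = 1/(1-2T)` and `u = T/(1-T)`, hence `w^{m+1} - u^{m+1} = ∑ₖ (2ᵏ C(m+k,m) - C(k-1,m)) Tᵏ`.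
Since `Tᵏ = uᵏ + O(u^{k+1})`, this change of variables multiplies the matrix by a unitriangular
one. Finally, for odd `m`, `2ᵏ C(m+k,m) - C(k-1,m)` is `2^{k/2}(θ_m(k) + θ_m(-k))` for `k ≥ 1` and
half of it for `k = 0`; these row factors multiply to `2^{n(n-1)/4}/2`.
-/

open PowerSeries Finset

namespace TwentyVertex

section Substitution

variable {R : Type*} [CommRing R]

lemma coeff_pow_of_lt {a : R⟦X⟧} (ha0 : constantCoeff a = 0) {i k : ℕ} (h : i < k) :
    coeff i (a ^ k) = 0 :=
  X_pow_dvd_iff.mp (pow_dvd_pow_of_dvd (X_dvd_iff.mpr ha0) k) i h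

lemma coeff_pow_self {a : R⟦X⟧} (ha0 : constantCoeff a = 0) (ha1 : coeff 1 a = 1) (i : ℕ) :
    coeff i (a ^ i) = 1 := by
  obtain ⟨b, rfl⟩ := X_dvd_iff.mpr ha0
  rw [coeff_succ_X_mul, coeff_zero_eq_constantCoeff] at ha1
  rw [mul_pow, coeff_X_pow_mul', if_pos le_rfl, Nat.sub_self, coeff_zero_eq_constantCoeff,
    map_pow, ha1, one_pow]

lemma coeff_subst_eq_sum_range {a : R⟦X⟧} (ha0 : constantCoeff a = 0) (f : R⟦X⟧) {i n : ℕ}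
    (h : i < n) : coeff i (f.subst a) = ∑ k ∈ range n, coeff k f * coeff i (a ^ k) := by
  rw [coeff_subst' (HasSubst.of_constantCoeff_zero' ha0)]
  refine finsum_eq_sum_of_support_subset _ fun k hk => ?_
  simp only [Function.mem_support, smul_eq_mul] at hk
  by_contra hkn
  exact hk (by rw [coeff_pow_of_lt ha0 (by simp at hkn; omega), mul_zero])

/-- The coefficient matrix of `f ∘ a` is that of `f` times the unitriangular matrix
`(coeff i (a ^ k))`. -/
lemma det_coeff_subst {a : R⟦X⟧} (ha0 : constantCoeff a = 0) (ha1 : coeff 1 a = 1) {n : ℕ}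
    (F : Fin n → R⟦X⟧) :
    (Matrix.of fun i j : Fin n => coeff i ((F j).subst a)).det =
      (Matrix.of fun i j : Fin n => coeff i (F j)).det := by
  let L : Matrix (Fin n) (Fin n) R := Matrix.of fun i k => coeff i (a ^ (k : ℕ))
  have hL : L.det = 1 := by
    rw [Matrix.det_of_isLowerTriangular L fun i k hik => coeff_pow_of_lt ha0 hik]
    exact prod_eq_one fun i _ => coeff_pow_self ha0 ha1 i
  have hmul : (Matrix.of fun i j : Fin n => coeff i ((F j).subst a)) =
      L * Matrix.of fun i j : Fin n => coeff i (F j) := by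
    ext i j
    rw [Matrix.of_apply, coeff_subst_eq_sum_range ha0 _ i.isLt, Matrix.mul_apply,
      ← Fin.sum_univ_eq_sum_range (fun k => coeff k (F j) * coeff i (a ^ k))]
    exact sum_congr rfl fun k _ => mul_comm _ _
  rw [hmul, Matrix.det_mul, hL, one_mul]

lemma mk_pow_mul_one_sub_C_mul_X (c : R) : (PowerSeries.mk fun j => c ^ j) * (1 - C c * X) = 1 := by
  have h := congrArg (rescale c) (mk_one_mul_one_sub_eq_one R)
  simpa only [map_mul, map_sub, map_one, rescale_mk, rescale_X, Pi.one_apply, mul_one] using h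

end Substitution

section Field

variable (k : Type*) [Field k]

def xDivOneAddX : k⟦X⟧ := X * (1 + X)⁻¹

def oneAddXDivOneSubX : k⟦X⟧ := (1 + X) * (1 - X)⁻¹

def columnSeries (m : ℕ) : k⟦X⟧ :=
  rescale 2 (invOneSubPow k (m + 1) : k⟦X⟧) - X ^ (m + 1) * (invOneSubPow k (m + 1) : k⟦X⟧)

variable {k}

lemma constantCoeff_xDivOneAddX : constantCoeff (xDivOneAddX k) = 0 := by
  simp [xDivOneAddX]

lemma coeff_one_xDivOneAddX : coeff 1 (xDivOneAddX k) = 1 := by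
  simp [xDivOneAddX, coeff_succ_X_mul, constantCoeff_inv]

lemma hasSubst_xDivOneAddX : HasSubst (xDivOneAddX k) :=
  HasSubst.of_constantCoeff_zero' constantCoeff_xDivOneAddX

lemma one_add_X_mul_inv : (1 + X : k⟦X⟧) * (1 + X)⁻¹ = 1 :=
  PowerSeries.mul_inv_cancel _ (by simp)

lemma one_sub_X_mul_inv : (1 - X : k⟦X⟧) * (1 - X)⁻¹ = 1 :=
  PowerSeries.mul_inv_cancel _ (by simp)

lemma xDivOneAddX_eq_X_mul : xDivOneAddX k = X * (1 - xDivOneAddX k) := by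
  rw [xDivOneAddX]
  linear_combination (X : k⟦X⟧) * one_add_X_mul_inv (k := k)

lemma one_sub_X_mul_oneAddXDivOneSubX : (1 - X) * oneAddXDivOneSubX k = 1 + X := by
  rw [oneAddXDivOneSubX, mul_left_comm, one_sub_X_mul_inv, mul_one]

lemma one_sub_two_mul_xDivOneAddX_mul : (1 - 2 * xDivOneAddX k) * oneAddXDivOneSubX k = 1 := by
  rw [xDivOneAddX]
  linear_combination (1 - oneAddXDivOneSubX k) * one_add_X_mul_inv (k := k)
    + (1 + X)⁻¹ * one_sub_X_mul_oneAddXDivOneSubX (k := k)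

lemma subst_columnSeries (m : ℕ) :
    (columnSeries k m).subst (xDivOneAddX k) = oneAddXDivOneSubX k ^ (m + 1) - X ^ (m + 1) := by
  set φ := substAlgHom (R := k) (hasSubst_xDivOneAddX (k := k))
  set S := (invOneSubPow k (m + 1) : k⟦X⟧)
  have hS : S * (1 - X) ^ (m + 1) = 1 := mk_add_choose_mul_one_sub_pow_eq_one k m
  have hφX : φ X = xDivOneAddX k := substAlgHom_X _
  have hRS : φ (rescale 2 S) * (1 - 2 * xDivOneAddX k) ^ (m + 1) = 1 := by
    simpa [rescale_X, hφX, map_ofNat] using congrArg (φ ∘ rescale (2 : k)) hS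
  have hφS : φ S * (1 - xDivOneAddX k) ^ (m + 1) = 1 := by
    simpa [hφX] using congrArg φ hS
  have hw : (1 - 2 * xDivOneAddX k) ^ (m + 1) * oneAddXDivOneSubX k ^ (m + 1) = 1 := by
    rw [← mul_pow, one_sub_two_mul_xDivOneAddX_mul, one_pow]
  have hT : xDivOneAddX k ^ (m + 1) = X ^ (m + 1) * (1 - xDivOneAddX k) ^ (m + 1) := by
    rw [← mul_pow, ← xDivOneAddX_eq_X_mul]
  rw [← coe_substAlgHom hasSubst_xDivOneAddX, columnSeries, map_sub, map_mul, map_pow, hφX]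
  linear_combination (-φ (rescale 2 S)) * hw + oneAddXDivOneSubX k ^ (m + 1) * hRS
    - X ^ (m + 1) * hφS - φ S * hT

lemma coeff_columnSeries (m i : ℕ) :
    coeff i (columnSeries k m) =
      2 ^ i * (m + i).choose m - if m < i then ((i - 1).choose m : k) else 0 := by
  simp only [columnSeries, map_sub, coeff_rescale, coeff_X_pow_mul',
    invOneSubPow_val_succ_eq_mk_add_choose, coeff_mk, Nat.succ_le_iff]
  split_ifs
  · rw [show m + (i - (m + 1)) = i - 1 by omega]
  · rfl

end Field

section Bivariate

def varEquiv : Fin 2 ≃ Option Unit where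
  toFun i := if i = 0 then some () else none
  invFun o := o.elim 1 fun _ => 0
  left_inv := by decide
  right_inv := by decide

/-- `PS` as power series in `v` over power series in `u`. -/
def vExpand : PS ≃ₐ[ℚ] PowerSeries ℚ⟦X⟧ :=
  (MvPowerSeries.renameEquiv ℚ varEquiv).trans (MvPowerSeries.optionEquivLeft Unit ℚ)

lemma vExpand_apply (f : PS) :
    vExpand f = MvPowerSeries.optionEquivLeft Unit ℚ (MvPowerSeries.rename varEquiv f) := rfl

lemma vExpand_uu : vExpand uu = C X := by
  rw [vExpand_apply, uu, MvPowerSeries.rename_X]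
  exact MvPowerSeries.optionEquivLeft_X_some ()

lemma vExpand_vv : vExpand vv = X := by
  rw [vExpand_apply, vv, MvPowerSeries.rename_X]
  exact MvPowerSeries.optionEquivLeft_X_none

lemma cf_eq_coeff_coeff_vExpand (i j : ℕ) (f : PS) : cf i j f = coeff i (coeff j (vExpand f)) := by
  have hexp : (Finsupp.single () i).optionElim j =
      Finsupp.embDomain varEquiv.toEmbedding (Finsupp.single 0 i + Finsupp.single 1 j) := by
    ext (_ | ⟨⟩)
    · conv_rhs => rw [show (none : Option Unit) = varEquiv.toEmbedding 1 from rfl,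
        Finsupp.embDomain_apply_self]
      simp
    · conv_rhs => rw [show some () = varEquiv.toEmbedding 0 from rfl,
        Finsupp.embDomain_apply_self]
      simp
  rw [vExpand_apply, coeff, MvPowerSeries.coeff_coeff_optionEquivLeft, hexp]
  exact (MvPowerSeries.coeff_embDomain_rename varEquiv.toEmbedding f _).symm

/-- With `w = (1+u)/(1-u)`, the partial fractions `g20V = w²/(1 - w² v) - u²/(1 - u² v)`. -/
lemma vExpand_g20V : vExpand g20V =
    C (oneAddXDivOneSubX ℚ ^ 2) * PowerSeries.mk (fun j => (oneAddXDivOneSubX ℚ ^ 2) ^ j)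
      - C (X ^ 2) * PowerSeries.mk (fun j => (X ^ 2 : ℚ⟦X⟧) ^ j) := by
  set D : PS := (1 - uu ^ 2 * vv) * ((1 - uu) ^ 2 - vv * (1 + uu) ^ 2)
  have hD : MvPowerSeries.constantCoeff D ≠ 0 := by simp [D, uu, vv]
  have hg : g20V * D = (1 + uu ^ 2) * (1 + 2 * uu - uu ^ 2) := by
    rw [g20V, mul_assoc, MvPowerSeries.inv_mul_cancel _ hD, mul_one]
  have hne : vExpand D ≠ 0 := (map_ne_zero_iff _ vExpand.injective).mpr fun h => hD (by simp [h])
  have hA := mk_pow_mul_one_sub_C_mul_X (oneAddXDivOneSubX ℚ ^ 2)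
  have hU := mk_pow_mul_one_sub_C_mul_X (X ^ 2 : ℚ⟦X⟧)
  have hw : (1 - C X) * C (oneAddXDivOneSubX ℚ) = 1 + C X := by
    simpa using congrArg C (one_sub_X_mul_oneAddXDivOneSubX (k := ℚ))
  set w := C (oneAddXDivOneSubX ℚ)
  apply mul_right_cancel₀ hne
  rw [← map_mul, hg]
  simp only [D, map_mul, map_sub, map_add, map_pow, map_one, map_ofNat, vExpand_uu, vExpand_vv]
    at hA hU ⊢
  linear_combination (-(w ^ 2 * (1 - C X) ^ 2 * (1 - C X ^ 2 * X))) * hA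
    + (C X ^ 2 * ((1 - C X) ^ 2 - X * (1 + C X) ^ 2)) * hU
    - (w ^ 2 * PowerSeries.mk (fun j => (oneAddXDivOneSubX ℚ ^ 2) ^ j) * (1 - C X ^ 2 * X) * X
      + (1 - C X ^ 2 * X)) * ((1 - C X) * w + (1 + C X)) * hw

lemma cf_g20V (i j : ℕ) :
    cf i j g20V = coeff i (oneAddXDivOneSubX ℚ ^ (2 * (j + 1)) - X ^ (2 * (j + 1))) := by
  rw [cf_eq_coeff_coeff_vExpand, vExpand_g20V, map_sub, coeff_C_mul, coeff_C_mul, coeff_mk,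
    coeff_mk, ← pow_succ', ← pow_succ', ← pow_mul, ← pow_mul]

end Bivariate

section Theta

lemma theta_natCast (m i : ℕ) : theta m i = 2 ^ ((i : ℝ) / 2) * (i + m).choose m := by
  have hprod : ∏ k ∈ range m, ((i : ℝ) + k + 1) = m.factorial * (i + m).choose m := by
    rw [← Nat.cast_mul, ← Nat.ascFactorial_eq_factorial_mul_choose, Nat.ascFactorial_eq_prod_range]
    push_cast
    exact prod_congr rfl fun k _ => by ring
  rw [theta, hprod]
  field_simp

lemma theta_neg_natCast {m : ℕ} (hm : Odd m) {i : ℕ} (hi : 1 ≤ i) :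
    theta m (-i) = -(2 ^ ((i : ℝ) / 2))⁻¹ * (i - 1).choose m := by
  have hprod : ∏ k ∈ range m, (-(i : ℝ) + k + 1) = -(m.factorial * (i - 1).choose m) := by
    have h : ∀ k ∈ range m, (-(i : ℝ) + k + 1) = -1 * (((i - 1 : ℕ) : ℝ) - k) := fun k _ => by
      rw [Nat.cast_sub hi]; ring
    rw [prod_congr rfl h, prod_mul_distrib, prod_const, card_range, hm.neg_one_pow,
      prod_range_natCast_sub, ← Nat.descFactorial_eq_prod_range,
      Nat.descFactorial_eq_factorial_mul_choose]
    push_cast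
    ring
  rw [theta, hprod, neg_div, Real.rpow_neg zero_le_two]
  field_simp

lemma coeff_columnSeries_eq_theta {m : ℕ} (hm : Odd m) (i : ℕ) :
    ((coeff i (columnSeries ℚ m) : ℚ) : ℝ) =
      2 ^ ((i : ℝ) / 2) / (if i = 0 then 2 else 1) * (theta m i + theta m (-i)) := by
  rcases Nat.eq_zero_or_pos i with rfl | hi
  · have h0 := theta_natCast m 0
    norm_num [coeff_columnSeries] at h0 ⊢
    rw [h0]
    norm_num
  have hchoose : (if m < i then ((i - 1).choose m : ℚ) else 0) = (i - 1).choose m := by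
    split_ifs with h
    · rfl
    · rw [Nat.choose_eq_zero_of_lt (by omega), Nat.cast_zero]
  have hsq : (2 : ℝ) ^ ((i : ℝ) / 2) * 2 ^ ((i : ℝ) / 2) = 2 ^ i := by
    rw [← Real.rpow_add two_pos, add_halves, Real.rpow_natCast]
  rw [coeff_columnSeries, hchoose, if_neg hi.ne', theta_natCast, theta_neg_natCast hm hi,
    add_comm m i]
  push_cast
  field_simp
  linear_combination (-((i + m).choose m : ℝ)) * hsq

lemma prod_rpow_half (n : ℕ) :
    ∏ i : Fin n, (2 : ℝ) ^ (((i : ℕ) : ℝ) / 2) = 2 ^ (((n * (n - 1) : ℕ) : ℝ) / 4) := by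
  rw [← Real.rpow_sum_of_pos two_pos, Fin.sum_univ_eq_sum_range (fun i => (i : ℝ) / 2),
    ← sum_div, ← Nat.cast_sum, ← sum_range_id_mul_two]
  push_cast
  ring_nf

lemma prod_rowScale {n : ℕ} (hn : 1 ≤ n) :
    ∏ i : Fin n, (2 : ℝ) ^ (((i : ℕ) : ℝ) / 2) / (if (i : ℕ) = 0 then 2 else 1) =
      2 ^ (((n * (n - 1) : ℕ) : ℝ) / 4) / 2 := by
  obtain ⟨n, rfl⟩ := Nat.exists_eq_add_of_le' hn
  rw [prod_div_distrib, prod_rpow_half, Fin.prod_univ_succ]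
  simp

end Theta

end TwentyVertex

open TwentyVertex

theorem det_g20V_eq_theta_det (n : ℕ) (hn : 1 ≤ n) :
    ((Matrix.det (Matrix.of fun i j : Fin n => cf i j g20V) : ℚ) : ℝ) =
      (2 : ℝ) ^ (((n * (n - 1) : ℕ) : ℝ) / 4) / 2 *
        Matrix.det (Matrix.of fun i j : Fin n =>
          theta (2 * (j : ℕ) + 1) ((i : ℕ) : ℝ) + theta (2 * (j : ℕ) + 1) (-((i : ℕ) : ℝ))) := by
  have hsubst : (Matrix.of fun i j : Fin n => cf i j g20V) = Matrix.of fun i j : Fin n =>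
      coeff i ((columnSeries ℚ (2 * j + 1)).subst (xDivOneAddX ℚ)) := by
    ext i j
    rw [Matrix.of_apply, Matrix.of_apply, cf_g20V, subst_columnSeries]
    rfl
  have hrows : (Rat.castHom ℝ).mapMatrix (Matrix.of fun i j : Fin n =>
      coeff i (columnSeries ℚ (2 * j + 1))) = Matrix.of fun i j : Fin n =>
        (2 : ℝ) ^ (((i : ℕ) : ℝ) / 2) / (if (i : ℕ) = 0 then 2 else 1) *
          (theta (2 * (j : ℕ) + 1) ((i : ℕ) : ℝ) + theta (2 * (j : ℕ) + 1) (-((i : ℕ) : ℝ))) := by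
    ext i j
    exact coeff_columnSeries_eq_theta ⟨j, rfl⟩ i
  rw [hsubst, det_coeff_subst constantCoeff_xDivOneAddX coeff_one_xDivOneAddX, ← Rat.coe_castHom,
    RingHom.map_det, hrows, ← prod_rowScale hn]
  exact Matrix.det_mul_column _ _
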